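/- Let n ≥ 2, let 1 ≤ k ≤ n−1, and set b_{n,r} := gcd{C(n,1), C(n,2), …, C(n,r)}. Then the quotient b_{n,k}/b_{n,k+1} is either equal to 1 or equal to a prime number dividing n. -/

import Mathlib

/-- `bnr n r = gcd {C(n,1), …, C(n,r)}`. -/
def bnr (n r : ℕ) : ℕ := (Finset.Icc 1 r).gcd (n.choose ·)

/-!
For a prime `p`, `v_p(b_{n,k}) = v_p(n) - ⌊log_p k⌋` (truncated). The lower bound is
`n ∣ C(n,j) * j`; the upper bound is attained at `j = p^t` with `t = min(⌊log_p k⌋, v_p(n))`,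
since Lucas' theorem gives `p ∤ C(n-1, p^t-1)` when `p^t ∣ n`. Hence the valuation of the ratio
`b_{n,k} / b_{n,k+1}` is at most `⌊log_p (k+1)⌋ - ⌊log_p k⌋`, which vanishes unless `k + 1` is a
power of `p`. So the ratio divides the prime `minFac (k+1)`, and it divides `b_{n,k}`, hence `n`.
-/

open Nat

namespace Nat

theorem choose_pred_add_mul_modEq {p : ℕ} [Fact p.Prime] (a b : ℕ) :
    (p - 1 + p * a).choose (p - 1 + p * b) ≡ a.choose b [MOD p] := by
  have hp : p - 1 < p := Nat.sub_lt (Fact.out : p.Prime).pos one_pos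
  simpa [Nat.add_mul_mod_self_left, Nat.mod_eq_of_lt hp, Nat.add_mul_div_left _ _
    (Fact.out : p.Prime).pos, Nat.div_eq_of_lt hp] using
    Choose.choose_modEq_choose_mod_mul_choose_div_nat (p := p) (n := p - 1 + p * a)
      (k := p - 1 + p * b)

theorem choose_pow_mul_sub_one_modEq_one {p : ℕ} [Fact p.Prime] (t : ℕ) {m : ℕ} (hm : m ≠ 0) :
    (p ^ t * m - 1).choose (p ^ t - 1) ≡ 1 [MOD p] := by
  -- the last `t` base-`p` digits of both arguments are `p - 1`
  induction t with
  | zero => simpa using Nat.ModEq.refl 1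
  | succ t ih =>
    have hp := (Fact.out : p.Prime).one_le
    have hpos : 1 ≤ p ^ t * m := Nat.one_le_iff_ne_zero.mpr (by positivity)
    have hsplit : ∀ x, 1 ≤ x → p * x - 1 = p - 1 + p * (x - 1) := fun x hx => by
      rw [Nat.mul_sub_one]; have : p ≤ p * x := Nat.le_mul_of_pos_right p hx; omega
    rw [pow_succ', mul_assoc, hsplit _ hpos, hsplit _ (Nat.one_le_pow _ _ (by omega))]
    exact (choose_pred_add_mul_modEq _ _).trans ih

theorem not_dvd_choose_pred_of_pow_dvd {p t n : ℕ} (hp : p.Prime) (hn : n ≠ 0) (h : p ^ t ∣ n) :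
    ¬ p ∣ (n - 1).choose (p ^ t - 1) := by
  have := Fact.mk hp
  obtain ⟨m, rfl⟩ := h
  rw [(choose_pow_mul_sub_one_modEq_one t (right_ne_zero_of_mul hn)).dvd_iff dvd_rfl]
  exact hp.not_dvd_one

theorem factorization_choose_of_pow_dvd {p t n : ℕ} (hp : p.Prime) (hn : n ≠ 0) (h : p ^ t ∣ n) :
    (n.choose (p ^ t)).factorization p = n.factorization p - t := by
  have hpt : p ^ t ≠ 0 := pow_ne_zero t hp.ne_zero
  have hc : n.choose (p ^ t) ≠ 0 := (choose_pos (le_of_dvd (pos_of_ne_zero hn) h)).ne'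
  have hc' : (n - 1).choose (p ^ t - 1) ≠ 0 := (choose_pos (by
    have := le_of_dvd (pos_of_ne_zero hn) h; omega)).ne'
  have hmul : n * (n - 1).choose (p ^ t - 1) = n.choose (p ^ t) * p ^ t := by
    obtain ⟨N, rfl⟩ := exists_eq_succ_of_ne_zero hn
    obtain ⟨K, hK⟩ := exists_eq_succ_of_ne_zero hpt
    simpa [hK] using add_one_mul_choose_eq N K
  have hval := congrArg (·.factorization p) hmul
  simp only [factorization_mul hn hc', factorization_mul hc hpt, Finsupp.add_apply,
    factorization_eq_zero_of_not_dvd (not_dvd_choose_pred_of_pow_dvd hp hn h),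
    hp.factorization_pow, Finsupp.single_eq_same] at hval
  omega

theorem log_succ_sub_log_le_factorization_minFac {r k : ℕ} (hr : r.Prime) (hk : k ≠ 0) :
    log r (k + 1) - log r k ≤ (k + 1).minFac.factorization r := by
  by_cases heq : log r k = log r (k + 1)
  · omega
  have hpow : r ^ log r (k + 1) = k + 1 := by
    by_contra h; exact heq ((log_eq_log_succ_iff hr.one_lt hk).mpr h)
  have hL : log r (k + 1) ≠ 0 := by
    intro h; rw [h, pow_zero] at hpow; omega
  have hle : log r (k + 1) ≤ log r k + 1 := by
    rw [← Nat.pow_le_pow_iff_right hr.one_lt, hpow]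
    exact lt_pow_succ_log_self hr.one_lt k
  have hmin : (k + 1).minFac = r := by rw [← hpow, pow_minFac hL, hr.minFac_eq]
  rw [hmin, hr.factorization_self]
  omega

end Nat

section bnr

variable {n k : ℕ}

theorem bnr_dvd_choose {j : ℕ} (hj : j ∈ Finset.Icc 1 k) : bnr n k ∣ n.choose j :=
  Finset.gcd_dvd hj

theorem bnr_dvd (hk : k ≠ 0) : bnr n k ∣ n := by
  simpa using bnr_dvd_choose (n := n) (j := 1) (Finset.mem_Icc.mpr ⟨le_rfl, by omega⟩)

theorem bnr_succ_dvd_bnr : bnr n (k + 1) ∣ bnr n k :=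
  Finset.gcd_mono (Finset.Icc_subset_Icc_right k.le_succ)

theorem factorization_bnr {p : ℕ} (hp : p.Prime) (hn : n ≠ 0) (hk : k ≠ 0) :
    (bnr n k).factorization p = n.factorization p - log p k := by
  have hb : bnr n k ≠ 0 := ne_zero_of_dvd_ne_zero hn (bnr_dvd hk)
  apply le_antisymm
  · set t := min (log p k) (n.factorization p)
    have hdvd : p ^ t ∣ n := (pow_dvd_pow p (min_le_right _ _)).trans (ordProj_dvd n p)
    have hmem : p ^ t ∈ Finset.Icc 1 k := Finset.mem_Icc.mpr
      ⟨one_le_pow _ _ hp.pos, (Nat.pow_le_pow_right hp.pos (min_le_left _ _)).trans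
        (pow_log_le_self p hk)⟩
    have hle := (factorization_le_iff_dvd hb (choose_pos (le_of_dvd (pos_of_ne_zero hn)
      hdvd)).ne').mpr (bnr_dvd_choose hmem) p
    rw [factorization_choose_of_pow_dvd hp hn hdvd] at hle
    omega
  · rw [← hp.pow_dvd_iff_le_factorization hb]
    refine Finset.dvd_gcd fun j hj => ?_
    obtain ⟨hj1, hjk⟩ := Finset.mem_Icc.mp hj
    rcases le_or_gt j n with hjn | hjn
    · rw [hp.pow_dvd_iff_le_factorization (choose_pos hjn).ne']
      have hvj : j.factorization p ≤ log p k :=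
        le_log_of_pow_le hp.one_lt ((le_of_dvd hj1 (ordProj_dvd j p)).trans hjk)
      have := factorization_le_factorization_choose_add (p := p) hjn (by omega)
      omega
    · simp [choose_eq_zero_of_lt hjn]

theorem bnr_div_bnr_succ_dvd_minFac (hn : n ≠ 0) (hk : k ≠ 0) :
    bnr n k / bnr n (k + 1) ∣ (k + 1).minFac := by
  have hb : bnr n k ≠ 0 := ne_zero_of_dvd_ne_zero hn (bnr_dvd hk)
  have hq : bnr n k / bnr n (k + 1) ≠ 0 :=
    (Nat.div_pos (le_of_dvd (pos_of_ne_zero hb) bnr_succ_dvd_bnr)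
      (pos_of_ne_zero (ne_zero_of_dvd_ne_zero hb bnr_succ_dvd_bnr))).ne'
  rw [← factorization_prime_le_iff_dvd hq (minFac_pos _).ne']
  intro r hr
  rw [factorization_div bnr_succ_dvd_bnr, Finsupp.tsub_apply, factorization_bnr hr hn hk,
    factorization_bnr hr hn (by omega : k + 1 ≠ 0)]
  have := log_succ_sub_log_le_factorization_minFac hr hk
  omega

end bnr

theorem bnr_ratio_one_or_prime_general (n : ℕ) (hn : 2 ≤ n) (k : ℕ) (hk1 : 1 ≤ k) :
    bnr n k / bnr n (k + 1) = 1 ∨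
    ∃ p : ℕ, p.Prime ∧ p ∣ n ∧ bnr n k / bnr n (k + 1) = p := by
  have hp : (k + 1).minFac.Prime := minFac_prime (by omega)
  have hq : bnr n k / bnr n (k + 1) ∣ (k + 1).minFac :=
    bnr_div_bnr_succ_dvd_minFac (by omega) (by omega)
  have hqn : bnr n k / bnr n (k + 1) ∣ n :=
    (div_dvd_of_dvd bnr_succ_dvd_bnr).trans (bnr_dvd (by omega))
  rcases (dvd_prime hp).mp hq with h | h
  · exact Or.inl h
  · exact Or.inr ⟨_, hp, h ▸ hqn, h⟩

/-- Each quotient `b_{n,k}/b_{n,k+1}` is either `1` or a prime number dividing `n`. -/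
theorem bnr_ratio_one_or_prime (n : ℕ) (hn : 2 ≤ n) (k : ℕ) (hk1 : 1 ≤ k) (hk : k ≤ n - 1) :
    bnr n k / bnr n (k + 1) = 1 ∨
    ∃ p : ℕ, p.Prime ∧ p ∣ n ∧ bnr n k / bnr n (k + 1) = p :=
  bnr_ratio_one_or_prime_general n hn k hk1
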